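/- If 2 ≤ q ≤ 3 then for all real t ≥ 0, (1+t)^q ≤ 1 + q·t + (1/2)·q·(q-1)·t² + (q-2)·t³. -/

import Mathlib

/-!
Let `g(t)` be the right-hand side minus `(1 + t) ^ q`. Then `g(0) = g'(0) = 0`, and
`g''(t) = q(q-1) + 6(q-2)t - q(q-1)(1+t)^(q-2)`. Since `0 ≤ q - 2 ≤ 1`, Bernoulli's inequality
gives `(1+t)^(q-2) ≤ 1 + (q-2)t`, so `g''(t) ≥ (q-2)(6 - q(q-1))t ≥ 0` because `q(q-1) ≤ 6`
for `q ≤ 3`. Hence `g'` and then `g` are nondecreasing on `[0, ∞)`, so `g ≥ 0` there.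
-/

open Set

lemma monotoneOn_Ici_of_hasDerivAt_nonneg {f f' : ℝ → ℝ} {a : ℝ}
    (hf : ∀ x ∈ Ici a, HasDerivAt f (f' x) x) (hf' : ∀ x ∈ Ioi a, 0 ≤ f' x) :
    MonotoneOn f (Ici a) := by
  refine monotoneOn_of_hasDerivWithinAt_nonneg (f' := f') (convex_Ici a)
    (fun x hx ↦ (hf x hx).continuousAt.continuousWithinAt) (fun x hx ↦ ?_) ?_
  · rw [interior_Ici] at hx
    exact (hf x (mem_Ici.2 (le_of_lt hx))).hasDerivWithinAt
  · rwa [interior_Ici]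

lemma hasDerivAt_one_add_rpow (p : ℝ) {x : ℝ} (hx : 1 + x ≠ 0) :
    HasDerivAt (fun t : ℝ ↦ (1 + t) ^ p) (p * (1 + x) ^ (p - 1)) x := by
  simpa using ((hasDerivAt_id x).const_add 1).rpow_const (p := p) (Or.inl hx)

section CubicTaylorGap

variable (q : ℝ)

noncomputable def cubicTaylorGap (t : ℝ) : ℝ :=
  1 + q * t + (1 / 2) * q * (q - 1) * t ^ 2 + (q - 2) * t ^ 3 - (1 + t) ^ q

noncomputable def cubicTaylorGapDeriv (t : ℝ) : ℝ :=
  q + q * (q - 1) * t + 3 * (q - 2) * t ^ 2 - q * (1 + t) ^ (q - 1)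

lemma hasDerivAt_cubicTaylorGap {x : ℝ} (hx : 1 + x ≠ 0) :
    HasDerivAt (cubicTaylorGap q) (cubicTaylorGapDeriv q x) x := by
  have h := ((((hasDerivAt_const x 1).add ((hasDerivAt_id x).const_mul q)).add
    ((hasDerivAt_pow 2 x).const_mul ((1 / 2) * q * (q - 1)))).add
    ((hasDerivAt_pow 3 x).const_mul (q - 2))).sub (hasDerivAt_one_add_rpow q hx)
  exact h.congr_deriv (by simp only [cubicTaylorGapDeriv]; ring)

lemma hasDerivAt_cubicTaylorGapDeriv {x : ℝ} (hx : 1 + x ≠ 0) :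
    HasDerivAt (cubicTaylorGapDeriv q)
      (q * (q - 1) + 6 * (q - 2) * x - q * (q - 1) * (1 + x) ^ (q - 2)) x := by
  have h := (((hasDerivAt_const x q).add ((hasDerivAt_id x).const_mul (q * (q - 1)))).add
    ((hasDerivAt_pow 2 x).const_mul (3 * (q - 2)))).sub
    ((hasDerivAt_one_add_rpow (q - 1) hx).const_mul q)
  rw [show q - 1 - 1 = q - 2 by ring] at h
  exact h.congr_deriv (by ring)

variable {q}

lemma second_deriv_cubicTaylorGap_nonneg (hq2 : 2 ≤ q) (hq3 : q ≤ 3) {x : ℝ} (hx : 0 ≤ x) :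
    0 ≤ q * (q - 1) + 6 * (q - 2) * x - q * (q - 1) * (1 + x) ^ (q - 2) := by
  have bernoulli : (1 + x) ^ (q - 2) ≤ 1 + (q - 2) * x :=
    rpow_one_add_le_one_add_mul_self (by linarith) (by linarith) (by linarith)
  have hq_sq : q * (q - 1) ≤ 6 := by nlinarith
  calc 0 ≤ (q - 2) * x * (6 - q * (q - 1)) := by
        have : 0 ≤ q - 2 := by linarith
        positivity
    _ = q * (q - 1) + 6 * (q - 2) * x - q * (q - 1) * (1 + (q - 2) * x) := by ring
    _ ≤ _ := by gcongr; nlinarith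

lemma monotoneOn_cubicTaylorGapDeriv (hq2 : 2 ≤ q) (hq3 : q ≤ 3) :
    MonotoneOn (cubicTaylorGapDeriv q) (Ici 0) :=
  monotoneOn_Ici_of_hasDerivAt_nonneg
    (fun x hx ↦ hasDerivAt_cubicTaylorGapDeriv q (by linarith [mem_Ici.1 hx]))
    (fun x hx ↦ second_deriv_cubicTaylorGap_nonneg hq2 hq3 (le_of_lt hx))

lemma cubicTaylorGapDeriv_nonneg (hq2 : 2 ≤ q) (hq3 : q ≤ 3) {x : ℝ} (hx : 0 ≤ x) :
    0 ≤ cubicTaylorGapDeriv q x := by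
  simpa [cubicTaylorGapDeriv] using
    monotoneOn_cubicTaylorGapDeriv hq2 hq3 self_mem_Ici hx hx

lemma cubicTaylorGap_nonneg (hq2 : 2 ≤ q) (hq3 : q ≤ 3) {t : ℝ} (ht : 0 ≤ t) :
    0 ≤ cubicTaylorGap q t := by
  have hmono : MonotoneOn (cubicTaylorGap q) (Ici 0) :=
    monotoneOn_Ici_of_hasDerivAt_nonneg
      (fun x hx ↦ hasDerivAt_cubicTaylorGap q (by linarith [mem_Ici.1 hx]))
      (fun x hx ↦ cubicTaylorGapDeriv_nonneg hq2 hq3 (le_of_lt hx))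
  simpa [cubicTaylorGap] using hmono self_mem_Ici ht ht

end CubicTaylorGap

theorem rpow_le_taylor_cubic_remainder (q t : ℝ) (hq2 : 2 ≤ q) (hq3 : q ≤ 3)
    (ht : 0 ≤ t) :
    (1 + t) ^ q ≤ 1 + q * t + (1 / 2) * q * (q - 1) * t ^ 2 + (q - 2) * t ^ 3 :=
  sub_nonneg.1 (cubicTaylorGap_nonneg hq2 hq3 ht)
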